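/- arXiv:2506.05374 — 7 statements merged into one kernel-verified Lean document; each statement's English description precedes it below -/
import Mathlib

section
/- For all t ≥ 1 and all i with 2^(t−1) ≤ i < 2^t, the least period of the binomial sequence n ↦ C(n, i) mod 2 is exactly 2^t; that is, C(n + 2^t, i) ≡ C(n, i) (mod 2) for all n, and for every T with 0 < T < 2^t there exists n with C(n + T, i) ≢ C(n, i) (mod 2). -/
lemma binseq_mul_period {s : ℕ → ZMod 2} {p : ℕ} (hp : ∀ n, s (n + p) = s n) :
    ∀ k n, s (n + k * p) = s n := by
  intro k
  induction k with
  | zero => simp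
  | succ k ih =>
    intro n
    rw [Nat.succ_mul, ← Nat.add_assoc, hp, ih]

lemma binseq_period_pow (t i : ℕ) (hi : i < 2 ^ t) (n : ℕ) :
    ((n + 2 ^ t).choose i : ZMod 2) = (n.choose i : ZMod 2) := by
  rw [Nat.add_choose_eq]
  push_cast
  rw [Finset.sum_eq_single ((i, 0) : ℕ × ℕ)]
  · simp
  · rintro ⟨a, b⟩ hab hne
    simp only [Finset.HasAntidiagonal.mem_antidiagonal] at hab
    have hb : b ≠ 0 := by rintro rfl; exact hne (by simp [← hab])
    have hb2 : b ≠ 2 ^ t := by omega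
    have hdvd : (2 : ℕ) ∣ (2 ^ t).choose b :=
      Nat.Prime.dvd_choose_pow Nat.prime_two hb hb2
    have h0 : ((2 ^ t).choose b : ZMod 2) = 0 :=
      (ZMod.natCast_eq_zero_iff _ 2).mpr hdvd
    simp [h0]
  · intro h
    exact absurd (by simp) h

/-- For `t ≥ 1` and `2^(t-1) ≤ i < 2^t`, the least period of the binomial sequence
`n ↦ C(n, i) mod 2` is exactly `2^t`. -/
theorem binomial_sequence_least_period (t i : ℕ) (ht : 1 ≤ t)
    (hi₁ : 2 ^ (t - 1) ≤ i) (hi₂ : i < 2 ^ t) :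
    (∀ n : ℕ, ((n + 2 ^ t).choose i : ZMod 2) = (n.choose i : ZMod 2)) ∧
    (∀ T : ℕ, 0 < T → T < 2 ^ t →
      ∃ n : ℕ, ((n + T).choose i : ZMod 2) ≠ (n.choose i : ZMod 2)) := by
  classical
  set s : ℕ → ZMod 2 := fun n => (n.choose i : ZMod 2) with hs
  have hper2t : ∀ n, s (n + 2 ^ t) = s n := fun n => binseq_period_pow t i hi₂ n
  refine ⟨hper2t, ?_⟩
  intro T hT0 hT2
  by_contra hcon
  push_neg at hcon
  have hex : ∃ k, 0 < k ∧ ∀ n, s (n + k) = s n := ⟨T, hT0, hcon⟩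
  set p := Nat.find hex with hpdef
  obtain ⟨hp0, hpper⟩ := Nat.find_spec hex
  have hpT : p ≤ T := Nat.find_le ⟨hT0, hcon⟩
  -- p divides 2^t
  have hpd : p ∣ 2 ^ t := by
    set r := 2 ^ t % p with hrdef
    have hr : r < p := Nat.mod_lt _ hp0
    have hrper : ∀ n, s (n + r) = s n := by
      intro n
      have hk := binseq_mul_period hpper (2 ^ t / p) (n + r)
      have key : n + r + 2 ^ t / p * p = n + 2 ^ t := by
        have h2 : r + 2 ^ t / p * p = 2 ^ t := Nat.mod_add_div' (2 ^ t) p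
        omega
      rw [key, hper2t] at hk
      exact hk.symm
    have hr0 : r = 0 := by
      by_contra hr0
      exact Nat.find_min hex hr ⟨Nat.pos_of_ne_zero hr0, hrper⟩
    exact Nat.dvd_of_mod_eq_zero hr0
  -- hence p divides 2^(t-1)
  obtain ⟨u, hu, hpu⟩ := (Nat.dvd_prime_pow Nat.prime_two).mp hpd
  have hut : u ≤ t - 1 := by
    rcases Nat.lt_or_ge u t with h | h
    · omega
    · exfalso
      have : (2 : ℕ) ^ t ≤ 2 ^ u := Nat.pow_le_pow_right (by norm_num) h
      omega
  have hpd' : p ∣ 2 ^ (t - 1) := hpu ▸ pow_dvd_pow 2 hut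
  obtain ⟨m, hm⟩ := hpd'
  have hhalf : ∀ n, s (n + 2 ^ (t - 1)) = s n := by
    intro n
    have h3 := binseq_mul_period hpper m n
    rwa [show m * Nat.find hex = 2 ^ (t - 1) by rw [← hpdef, Nat.mul_comm, ← hm]] at h3
  -- contradiction at n = i - 2^(t-1)
  have h1 : s (i - 2 ^ (t - 1) + 2 ^ (t - 1)) = s (i - 2 ^ (t - 1)) :=
    hhalf (i - 2 ^ (t - 1))
  have hsum : i - 2 ^ (t - 1) + 2 ^ (t - 1) = i := Nat.sub_add_cancel hi₁
  have hlt : i - 2 ^ (t - 1) < i := by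
    have : 0 < 2 ^ (t - 1) := Nat.pow_pos (by norm_num)
    omega
  rw [hsum] at h1
  have hL : s i = 1 := by simp [hs]
  have hR : s (i - 2 ^ (t - 1)) = 0 := by
    simp [hs, Nat.choose_eq_zero_of_lt hlt]
  rw [hL, hR] at h1
  exact one_ne_zero h1
end

section
/- For every natural number t and every binary sequence s : ℕ → ZMod 2 satisfying s(n + 2^t) = s(n) for all n, there exists a unique vector c : Fin 2^t → ZMod 2 such that s(n) = Σ_{i=0}^{2^t−1} c_i · (C(n, i) mod 2) for all n ∈ ℕ. (Every binary sequence of period a power of two has a unique B-representation as a sum of binomial sequences; this is the bijection between such sequences and coefficient vectors, i.e., Boolean functions in reverse-ANF form.) -/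
lemma binom_per (t i : ℕ) (hi : i < 2 ^ t) (n : ℕ) :
    (((n + 2 ^ t).choose i : ℕ) : ZMod 2) = ((n.choose i : ℕ) : ZMod 2) := by
  rw [Nat.add_choose_eq]
  rw [Finset.Nat.sum_antidiagonal_eq_sum_range_succ_mk]
  push_cast
  rw [Finset.sum_eq_single i]
  · simp
  · intro b hb hbi
    simp only [Finset.mem_range] at hb
    have hb0' : i - b ≠ 0 := by omega
    have : (2 : ℕ) ∣ (2 ^ t).choose (i - b) :=
      Nat.Prime.dvd_choose_pow Nat.prime_two hb0' (by omega)
    have h2 : (((2 ^ t).choose (i - b) : ℕ) : ZMod 2) = 0 := by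
      exact_mod_cast (ZMod.natCast_eq_zero_iff _ 2).mpr this
    rw [h2, mul_zero]
  · intro h; simp at h

lemma inj_aux (N : ℕ) (c c' : Fin N → ZMod 2)
    (h : ∀ x : Fin N, ∑ i : Fin N, c i * ((x : ℕ).choose (i : ℕ) : ZMod 2)
        = ∑ i : Fin N, c' i * ((x : ℕ).choose (i : ℕ) : ZMod 2)) : c = c' := by
  have H : ∀ m : ℕ, ∀ x : Fin N, (x : ℕ) < m → c x = c' x := by
    intro m
    induction m with
    | zero => intro x hx; omega
    | succ m ih =>
      intro x hx
      by_cases hxm : (x : ℕ) < m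
      · exact ih x hxm
      · have hxe : (x : ℕ) = m := by omega
        have hx' := h x
        have hsplit : ∀ d : Fin N → ZMod 2,
            ∑ i : Fin N, d i * ((x : ℕ).choose (i : ℕ) : ZMod 2)
            = d x + ∑ i ∈ Finset.univ.filter (· < x),
                d i * ((x : ℕ).choose (i : ℕ) : ZMod 2) := by
          intro d
          rw [← Finset.sum_filter_add_sum_filter_not Finset.univ (· < x)]
          rw [add_comm]
          congr 1
          rw [Finset.sum_eq_single x]
          · simp
          · intro b hb hbx
            simp only [Finset.mem_filter, not_lt] at hb
            have hlt : (x : ℕ) < (b : ℕ) :=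
              lt_of_le_of_ne hb.2 (by simpa [Fin.le_def] using (Fin.val_ne_iff.mpr hbx).symm)
            rw [Nat.choose_eq_zero_of_lt hlt]
            simp
          · intro hx'; simp at hx'
        rw [hsplit c, hsplit c'] at hx'
        have heq : ∑ i ∈ Finset.univ.filter (· < x), c i * ((x : ℕ).choose (i : ℕ) : ZMod 2)
            = ∑ i ∈ Finset.univ.filter (· < x), c' i * ((x : ℕ).choose (i : ℕ) : ZMod 2) := by
          apply Finset.sum_congr rfl
          intro i hi
          simp only [Finset.mem_filter] at hi
          rw [ih i (by have := hi.2; omega)]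
        rw [heq] at hx'
        exact add_right_cancel hx'
  funext x
  exact H ((x : ℕ) + 1) x (Nat.lt_succ_self _)

/-- Every binary sequence of period `2^t` has a unique B-representation as a sum of
binomial sequences. -/
theorem exists_unique_B_representation (t : ℕ) (s : ℕ → ZMod 2)
    (hs : ∀ n : ℕ, s (n + 2 ^ t) = s n) :
    ∃! c : Fin (2 ^ t) → ZMod 2,
      ∀ n : ℕ, s n = ∑ i : Fin (2 ^ t), c i * (n.choose (i : ℕ) : ZMod 2) := by
  set N := 2 ^ t with hN
  set M : (Fin N → ZMod 2) → (Fin N → ZMod 2) :=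
    fun c x => ∑ i : Fin N, c i * ((x : ℕ).choose (i : ℕ) : ZMod 2) with hM
  have hMinj : Function.Injective M := by
    intro c c' h
    exact inj_aux N c c' (fun x => congrFun h x)
  have hMsurj : Function.Surjective M := Finite.surjective_of_injective hMinj
  obtain ⟨c, hc⟩ := hMsurj (fun x : Fin N => s (x : ℕ))
  have key : ∀ n : ℕ, s n = ∑ i : Fin N, c i * ((n.choose (i : ℕ) : ℕ) : ZMod 2) := by
    intro n
    induction n using Nat.strong_induction_on with
    | _ n ih =>
      by_cases hn : n < N
      · have := congrFun hc ⟨n, hn⟩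
        simpa [hM] using this.symm
      · push_neg at hn
        have hNpos : 0 < N := Nat.two_pow_pos t
        have hn' : n - N + N = n := Nat.sub_add_cancel hn
        have h1 : s n = s (n - N) := by
          nth_rewrite 1 [← hn']
          exact hs (n - N)
        have h2 : ∀ i : Fin N, ((n.choose (i : ℕ) : ℕ) : ZMod 2)
            = (((n - N).choose (i : ℕ) : ℕ) : ZMod 2) := by
          intro i
          nth_rewrite 1 [← hn']
          exact binom_per t (i : ℕ) i.isLt (n - N)
        rw [h1, ih (n - N) (by omega)]
        exact Finset.sum_congr rfl fun i _ => by rw [h2 i]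
  refine ⟨c, key, ?_⟩
  intro c' hc'
  apply hMinj
  funext x
  simp only [hM]
  rw [← hc' (x : ℕ), ← key (x : ℕ)]
end

section
/- Let t ∈ ℕ and let s, c : Fin 2^t → ZMod 2. Then s(j) = Σ_{i=0}^{2^t−1} c_i · (C(j, i) mod 2) for all j < 2^t if and only if c_i = Σ_{j=0}^{2^t−1} s(j) · (C(i, j) mod 2) for all i < 2^t. (The first 2^t terms of a sequence and its B-representation coefficients are related by s = c · H_t and, equivalently, c = s · H_t over ZMod 2.) -/
open Finset

lemma nat_sum_choose_mul_choose (n j N : ℕ) (hn : n < N) :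
    ∑ k ∈ range N, n.choose k * k.choose j = n.choose j * 2 ^ (n - j) := by
  rcases le_or_gt j n with hj | hj
  · have key : ∀ k ∈ range N, n.choose k * k.choose j
        = (if j ≤ k ∧ k ≤ n then n.choose j * (n - j).choose (k - j) else 0) := by
      intro k _
      by_cases h1 : j ≤ k
      · by_cases h2 : k ≤ n
        · simp [h1, h2, Nat.choose_mul (n := n) h1]
        · simp [h1, h2, Nat.choose_eq_zero_of_lt (lt_of_not_ge h2)]
      · simp [h1, Nat.choose_eq_zero_of_lt (lt_of_not_ge h1)]
    rw [Finset.sum_congr rfl key]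
    have : ∑ k ∈ range N, (if j ≤ k ∧ k ≤ n then n.choose j * (n - j).choose (k - j) else 0)
        = ∑ k ∈ Finset.Icc j n, n.choose j * (n - j).choose (k - j) := by
      rw [← Finset.sum_filter]
      apply Finset.sum_congr
      · ext k
        simp only [Finset.mem_filter, Finset.mem_range, Finset.mem_Icc]
        constructor
        · tauto
        · intro ⟨h1, h2⟩; exact ⟨lt_of_le_of_lt h2 hn, h1, h2⟩
      · intros; rfl
    rw [this, ← Finset.mul_sum]
    congr 1
    rw [show Finset.Icc j n = Finset.Ico j (n+1) by rw [Finset.Ico_add_one_right_eq_Icc],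
      Finset.sum_Ico_eq_sum_range]
    simp only [Nat.add_sub_cancel_left]
    rw [show n + 1 - j = n - j + 1 by omega, Nat.sum_range_choose]
  · have : ∀ k ∈ range N, n.choose k * k.choose j = 0 := by
      intro k _
      rcases le_or_gt k n with h | h
      · have : k < j := lt_of_le_of_lt h hj
        simp [Nat.choose_eq_zero_of_lt this]
      · simp [Nat.choose_eq_zero_of_lt h]
    rw [Finset.sum_congr rfl this]
    simp [Nat.choose_eq_zero_of_lt hj]

lemma zmod_sum_choose (n : ℕ) (i j : Fin n) :
    ∑ k : Fin n, ((j : ℕ).choose (k : ℕ) * (k : ℕ).choose (i : ℕ) : ZMod 2)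
      = if i = j then 1 else 0 := by
  have := nat_sum_choose_mul_choose (j : ℕ) (i : ℕ) n j.isLt
  have hcast : ((∑ k ∈ range n, (j:ℕ).choose k * k.choose (i:ℕ) : ℕ) : ZMod 2)
      = ∑ k : Fin n, ((j : ℕ).choose (k : ℕ) * (k : ℕ).choose (i : ℕ) : ZMod 2) := by
    push_cast
    rw [Finset.sum_range fun k => (((j:ℕ).choose k : ZMod 2) * ((k:ℕ).choose (i:ℕ) : ZMod 2))]
  rw [← hcast, this]
  rcases lt_trichotomy (i : ℕ) (j : ℕ) with h | h | h
  · have h2 : (j : ℕ) - (i : ℕ) ≠ 0 := by omega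
    have : (2 : ZMod 2) = 0 := by decide
    push_cast
    rw [this, zero_pow h2, mul_zero]
    have : i ≠ j := by intro he; subst he; omega
    simp [this]
  · have : i = j := Fin.ext h
    simp [this, h]
  · have hne : i ≠ j := fun he => by subst he; omega
    simp [Nat.choose_eq_zero_of_lt h, hne]

lemma involutive_step {n : ℕ} (v : Fin n → ZMod 2) (j : Fin n) :
    ∑ i : Fin n, (∑ k : Fin n, v k * ((i : ℕ).choose (k : ℕ) : ZMod 2))
        * ((j : ℕ).choose (i : ℕ) : ZMod 2) = v j := by
  simp_rw [Finset.sum_mul, mul_assoc]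
  rw [Finset.sum_comm]
  have : ∀ k : Fin n, ∑ i : Fin n, v k * (((i:ℕ).choose (k:ℕ) : ZMod 2) * ((j:ℕ).choose (i:ℕ) : ZMod 2))
      = v k * (if k = j then 1 else 0) := by
    intro k
    rw [← Finset.mul_sum]
    congr 1
    have := zmod_sum_choose n k j
    rw [← this]
    apply Finset.sum_congr rfl
    intro i _
    ring
  simp_rw [this]
  simp

/-- The first `2^t` terms of the sequence and the B-representation coefficients are
related by `s = c · H_t`, equivalently `c = s · H_t`, over `ZMod 2`. -/
theorem B_representation_matrix_relation (t : ℕ) (s c : Fin (2 ^ t) → ZMod 2) :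
    (∀ j : Fin (2 ^ t), s j = ∑ i : Fin (2 ^ t), c i * ((j : ℕ).choose (i : ℕ) : ZMod 2)) ↔
    (∀ i : Fin (2 ^ t), c i = ∑ j : Fin (2 ^ t), s j * ((i : ℕ).choose (j : ℕ) : ZMod 2)) := by
  constructor
  · intro h i
    calc c i = ∑ j : Fin (2^t), (∑ k : Fin (2^t), c k * ((j:ℕ).choose (k:ℕ) : ZMod 2))
        * ((i:ℕ).choose (j:ℕ) : ZMod 2) := (involutive_step c i).symm
      _ = ∑ j : Fin (2^t), s j * ((i:ℕ).choose (j:ℕ) : ZMod 2) := by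
          apply Finset.sum_congr rfl; intro j _; rw [← h j]
  · intro h j
    calc s j = ∑ i : Fin (2^t), (∑ k : Fin (2^t), s k * ((i:ℕ).choose (k:ℕ) : ZMod 2))
        * ((j:ℕ).choose (i:ℕ) : ZMod 2) := (involutive_step s j).symm
      _ = ∑ i : Fin (2^t), c i * ((j:ℕ).choose (i:ℕ) : ZMod 2) := by
          apply Finset.sum_congr rfl; intro i _; rw [← h i]
end

section
/- Let t ∈ ℕ and let k < 2^t. For all n < 2^t: C(2^t − 1 − n, k) ≡ C(n + k, k) (mod 2). (The reverse of the binomial sequence C(·, k) mod 2 over one period of length 2^t equals the cyclic shift of that sequence by k positions to the left.) -/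
/-!
Over a ring of characteristic 2 we have `1 - X = 1 + X` and `(1 + X) ^ 2 ^ t = 1 + X ^ 2 ^ t`.
Writing `m = 2 ^ t - 1 - n`, multiply `(1 + X) ^ m` by `(1 - X) ^ (n + 1)` and its inverse
`∑ C(n + j, n) X ^ j` to get `(1 + X) ^ m = (1 + X ^ 2 ^ t) * ∑ C(n + j, n) X ^ j`;
below degree `2 ^ t` the coefficients of the two sides are `C(m, k)` and `C(n + k, k)`.
-/

namespace PowerSeries

instance instCharP {R : Type*} [Semiring R] (p : ℕ) [CharP R p] : CharP R⟦X⟧ p :=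
  charP_of_injective_ringHom C_injective p

theorem coeff_one_add_X_pow {R : Type*} [Semiring R] (m k : ℕ) :
    coeff k ((1 + X : R⟦X⟧) ^ m) = m.choose k := by
  rw [← Polynomial.coe_X, ← Polynomial.coe_one, ← Polynomial.coe_add, ← Polynomial.coe_pow,
    Polynomial.coeff_coe, Polynomial.coeff_one_add_X_pow]

theorem one_add_X_pow_eq_mul_mk_choose {R : Type*} [CommRing R] [CharP R 2] {m n t : ℕ}
    (h : m + (n + 1) = 2 ^ t) :
    (1 + X : R⟦X⟧) ^ m = (1 + X ^ 2 ^ t) * mk fun j => ((n + j).choose n : R) := by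
  calc (1 + X : R⟦X⟧) ^ m
      = (1 + X) ^ m * ((1 - X) ^ (n + 1) * mk fun j => ((n + j).choose n : R)) := by
        rw [mul_comm ((1 - X) ^ _), mk_add_choose_mul_one_sub_pow_eq_one, mul_one]
    _ = (1 + X) ^ 2 ^ t * mk fun j => ((n + j).choose n : R) := by
        rw [CharTwo.sub_eq_add, ← mul_assoc, ← pow_add, h]
    _ = (1 + X ^ 2 ^ t) * mk fun j => ((n + j).choose n : R) := by
        rw [add_pow_char_pow, one_pow]

end PowerSeries

open PowerSeries in
/-- The reverse of the binomial sequence `C(·, k) mod 2` over one period of length `2^t`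
equals the cyclic shift of the sequence by `k` positions to the left. -/
theorem reverse_binomial_eq_shift (t k : ℕ) (hk : k < 2 ^ t) :
    ∀ n : ℕ, n < 2 ^ t →
      ((2 ^ t - 1 - n).choose k : ZMod 2) = ((n + k).choose k : ZMod 2) := by
  intro n hn
  have key := congrArg (coeff k)
    (one_add_X_pow_eq_mul_mk_choose (R := ZMod 2) (show 2 ^ t - 1 - n + (n + 1) = 2 ^ t by omega))
  rw [coeff_one_add_X_pow, add_mul, one_mul, map_add, coeff_X_pow_mul', if_neg (not_le.mpr hk),
    add_zero, coeff_mk] at key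
  rw [key, Nat.choose_symm_add]
end

section
/- Let t ∈ ℕ and let k < 2^t. For all n < 2^t: C(2^t − 1 − n, k) ≡ Σ_{i=0}^{k} C(k, i) · C(n, i) (mod 2). (The B-representation of the reverse of the binomial sequence C(·, k) mod 2 is obtained from the k-th row of the binary Sierpinski triangle: it is the sum of the binomial sequences C(·, i) mod 2 over those i ≤ k with C(k, i) odd.) -/
open Finset

lemma choose_two_step (a b : ℕ) :
    ((a.choose b : ZMod 2)) = ((a % 2).choose (b % 2) : ZMod 2) * ((a / 2).choose (b / 2) : ZMod 2) := by
  have h := @Choose.choose_modEq_choose_mod_mul_choose_div_nat a b 2 ⟨Nat.prime_two⟩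
  rw [← Nat.cast_mul]
  exact (ZMod.natCast_eq_natCast_iff _ _ _).mpr h

lemma key (t : ℕ) : ∀ n k : ℕ, n < 2 ^ t → k < 2 ^ t →
    ((2 ^ t - 1 - n).choose k : ZMod 2) = ((n + k).choose k : ZMod 2) := by
  induction t with
  | zero =>
    intro n k hn hk
    interval_cases n <;> interval_cases k <;> simp
  | succ t ih =>
    intro n k hn hk
    have hP : 0 < 2 ^ t := Nat.pow_pos (by norm_num)
    have hpow : 2 ^ (t + 1) = 2 * 2 ^ t := by ring
    rw [choose_two_step, choose_two_step (n + k)]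
    rcases Nat.mod_two_eq_zero_or_one n with hr | hr <;>
      rcases Nat.mod_two_eq_zero_or_one k with hs | hs
    · have h1 : (2 ^ (t + 1) - 1 - n) % 2 = 1 := by omega
      have h2 : (2 ^ (t + 1) - 1 - n) / 2 = 2 ^ t - 1 - n / 2 := by omega
      have h3 : (n + k) % 2 = 0 := by omega
      have h4 : (n + k) / 2 = n / 2 + k / 2 := by omega
      rw [h1, h2, h3, h4, hs, ih (n / 2) (k / 2) (by omega) (by omega)]
      simp
    · have h1 : (2 ^ (t + 1) - 1 - n) % 2 = 1 := by omega
      have h2 : (2 ^ (t + 1) - 1 - n) / 2 = 2 ^ t - 1 - n / 2 := by omega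
      have h3 : (n + k) % 2 = 1 := by omega
      have h4 : (n + k) / 2 = n / 2 + k / 2 := by omega
      rw [h1, h2, h3, h4, hs, ih (n / 2) (k / 2) (by omega) (by omega)]
    · have h1 : (2 ^ (t + 1) - 1 - n) % 2 = 0 := by omega
      have h2 : (2 ^ (t + 1) - 1 - n) / 2 = 2 ^ t - 1 - n / 2 := by omega
      have h3 : (n + k) % 2 = 1 := by omega
      have h4 : (n + k) / 2 = n / 2 + k / 2 := by omega
      rw [h1, h2, h3, h4, hs, ih (n / 2) (k / 2) (by omega) (by omega)]
      simp
    · have h1 : (2 ^ (t + 1) - 1 - n) % 2 = 0 := by omega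
      have h3 : (n + k) % 2 = 0 := by omega
      rw [h1, h3, hs]
      simp

lemma vand (n k : ℕ) :
    ((n + k).choose k : ZMod 2) =
      ∑ i ∈ Finset.range (k + 1), (k.choose i : ZMod 2) * (n.choose i : ZMod 2) := by
  rw [add_comm n k, Nat.add_choose_eq]
  rw [Finset.Nat.sum_antidiagonal_eq_sum_range_succ (fun i j => k.choose i * n.choose j)]
  push_cast
  rw [← Finset.sum_range_reflect]
  refine Finset.sum_congr rfl fun i hi => ?_
  simp only [Finset.mem_range] at hi
  have h1 : k.succ - 1 - i = k - i := by omega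
  have h2 : k - (k - i) = i := by omega
  rw [h1, h2, Nat.choose_symm (by omega)]

/-- The B-representation of the reverse of the binomial sequence `C(·, k) mod 2` is given
by the `k`-th row of the binary Sierpinski triangle:
`C(2^t - 1 - n, k) ≡ Σ_{i=0}^{k} C(k, i) C(n, i) (mod 2)`. -/
theorem reverse_binomial_B_representation (t k : ℕ) (hk : k < 2 ^ t) :
    ∀ n : ℕ, n < 2 ^ t →
      ((2 ^ t - 1 - n).choose k : ZMod 2) =
        ∑ i ∈ Finset.range (k + 1), (k.choose i : ZMod 2) * (n.choose i : ZMod 2) := by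
  intro n hn
  rw [key t n k hn hk, vand]
end

section
/- For every natural number i, the linear complexity of the binomial sequence n ↦ C(n, i) mod 2 equals i + 1; precisely: (a) the sequence satisfies the linear recurrence of order i + 1 given by Σ_{j=0}^{i+1} (C(i+1, j) mod 2) · (C(n + j, i) mod 2) = 0 in ZMod 2 for all n; and (b) for every m ≤ i and every choice of coefficients a_0, …, a_{m−1} ∈ ZMod 2 there exists n such that C(n + m, i) mod 2 ≠ Σ_{j=0}^{m−1} a_j · (C(n + j, i) mod 2), i.e., the sequence satisfies no linear recurrence of order m ≤ i. -/
/-!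
The sequence `n ↦ C(n, i)` is a polynomial of degree `i` in `n`, so its `(i + 1)`-st forward
difference vanishes; expanding that difference gives an alternating sum, and modulo `2` the signs
disappear. Conversely the sequence is zero below `i` and equals `1` at `i`, so a recurrence of order
`m ≤ i` applied at `n = i - m` would express that `1` through earlier zeros.
-/

open Finset fwdDiff

theorem fwdDiff_iter_succ_choose_eq_zero (i : ℕ) :
    (Δ_[1])^[i + 1] (fun x ↦ x.choose i : ℕ → ℤ) = 0 := by
  have hconst : (Δ_[1])^[i] (fun x ↦ x.choose i : ℕ → ℤ) = fun _ ↦ 1 := by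
    simpa using fwdDiff_iter_choose 0 i
  rw [Function.iterate_succ_apply', hconst, fwdDiff_const]
  rfl

theorem CharTwo.sum_choose_mul_choose_add_eq_zero {R : Type*} [Ring R] [CharP R 2] (i n : ℕ) :
    ∑ j ∈ range (i + 2), ((i + 1).choose j : R) * ((n + j).choose i : R) = 0 := by
  have hΔ := congrArg (Int.cast : ℤ → R)
    (congrFun (fwdDiff_iter_succ_choose_eq_zero i) n)
  rw [fwdDiff_iter_eq_sum_shift] at hΔ
  simpa [CharTwo.neg_eq] using hΔ

theorem exists_ne_sum_mul_of_eq_zero_of_lt {R : Type*} [NonUnitalNonAssocSemiring R]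
    {s : ℕ → R} {i m : ℕ} (hs : ∀ k < i, s k = 0) (hi : s i ≠ 0) (hm : m ≤ i) (a : ℕ → R) :
    ∃ n, s (n + m) ≠ ∑ j ∈ range m, a j * s (n + j) := by
  refine ⟨i - m, ?_⟩
  have hterms : ∀ j ∈ range m, a j * s (i - m + j) = 0 := fun j hj ↦ by
    rw [hs _ (by grind), mul_zero]
  rwa [sum_eq_zero hterms, Nat.sub_add_cancel hm]

/-- The linear complexity of the binomial sequence `n ↦ C(n, i) mod 2` equals `i + 1`:
(a) it satisfies the order-`(i+1)` recurrence with coefficients `C(i+1, j)`;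
(b) it satisfies no linear recurrence of order `m ≤ i`. -/
theorem binomial_sequence_linear_complexity (i : ℕ) :
    (∀ n : ℕ,
      ∑ j ∈ Finset.range (i + 2), ((i + 1).choose j : ZMod 2) * ((n + j).choose i : ZMod 2)
        = 0) ∧
    (∀ m ≤ i, ∀ a : ℕ → ZMod 2, ∃ n : ℕ,
      ((n + m).choose i : ZMod 2) ≠
        ∑ j ∈ Finset.range m, a j * ((n + j).choose i : ZMod 2)) :=
  ⟨CharTwo.sum_choose_mul_choose_add_eq_zero i, fun _ hm ↦
    exists_ne_sum_mul_of_eq_zero_of_lt (s := fun n ↦ (n.choose i : ZMod 2))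
      (fun _ hk ↦ by simp [Nat.choose_eq_zero_of_lt hk]) (by simp) hm⟩
end

section
/- Let t ∈ ℕ, let c : Fin 2^t → ZMod 2 be a nonzero vector, let i_k be the largest index with c_{i_k} ≠ 0, and define s(n) = Σ_{i=0}^{2^t−1} c_i · (C(n, i) mod 2). Then the linear complexity of s equals i_k + 1; precisely: (a) Σ_{j=0}^{i_k+1} (C(i_k + 1, j) mod 2) · s(n + j) = 0 in ZMod 2 for all n; and (b) for every choice of coefficients a_0, …, a_{i_k−1} ∈ ZMod 2 there exists n such that s(n + i_k) ≠ Σ_{j=0}^{i_k−1} a_j · s(n + j). -/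
/-!
The forward difference `Δ` lowers the index of each binomial sequence by one (Pascal's rule), so
`Δ^[i_k] s` is the nonzero constant `c i_k` and `Δ^[i_k + 1] s = 0`. In characteristic two the
signs in `Δ^[i_k + 1] s n = ∑ ± C(i_k + 1, j) s (n + j)` disappear, which is (a). For (b), Newton's
formula turns a recurrence of order `i_k` into a relation `∑_{m ≤ i_k} β m • Δ^[m] s = 0` with
`β i_k = 1`; applying `Δ^[i_k - m]` to it isolates the lowest nonzero `β m`, since the `i_k`-th
difference of `s` is a nonzero constant and all higher ones vanish.
-/

open Finset Function fwdDiff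

section

variable {R : Type*}

@[simp]
lemma fwdDiff_iter_zero [AddCommGroup R] (k : ℕ) : Δ_[1] ^[k] (0 : ℕ → R) = 0 :=
  iterate_fixed (fwdDiff_const 1 0) k

lemma fwdDiff_iter_eq_zero_of_eq_const [AddCommGroup R] {f : ℕ → R} {K j : ℕ} {u : R}
    (hf : Δ_[1] ^[K] f = fun _ ↦ u) (hj : K < j) : Δ_[1] ^[j] f = 0 := by
  obtain ⟨l, rfl⟩ := Nat.exists_eq_add_of_lt hj
  rw [show K + l + 1 = l + 1 + K by omega, iterate_add_apply, hf, iterate_succ_apply,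
    fwdDiff_const]
  exact fwdDiff_iter_zero l

lemma fwdDiff_natCast_choose [AddCommGroupWithOne R] (j : ℕ) :
    Δ_[1] (fun x ↦ (x.choose (j + 1) : R)) = fun x ↦ (x.choose j : R) := by
  ext n
  simp only [fwdDiff, Nat.choose_succ_succ', Nat.cast_add, add_sub_cancel_right]

lemma fwdDiff_iter_natCast_choose [AddCommGroupWithOne R] (j k : ℕ) :
    Δ_[1] ^[k] (fun x ↦ (x.choose (k + j) : R)) = fun x ↦ (x.choose j : R) := by
  induction k generalizing j with
  | zero => simp
  | succ k ih =>
    simp only [iterate_succ_apply', add_assoc, add_comm 1 j, ih, fwdDiff_natCast_choose]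

lemma fwdDiff_iter_natCast_choose_self [AddCommGroupWithOne R] (k : ℕ) :
    Δ_[1] ^[k] (fun x ↦ (x.choose k : R)) = fun _ ↦ 1 := by
  simpa using fwdDiff_iter_natCast_choose (R := R) 0 k

lemma fwdDiff_iter_sum_mul_choose [Ring R] {N : ℕ} (c : Fin N → R) (K : Fin N)
    (htop : ∀ j, K < j → c j = 0) :
    Δ_[1] ^[K] (fun n : ℕ ↦ ∑ i, c i * (n.choose i : R)) = fun _ ↦ c K := by
  have hsum : (fun n : ℕ ↦ ∑ i, c i * (n.choose i : R)) =
      ∑ i, c i • fun n : ℕ ↦ (n.choose i : R) := by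
    ext n
    simp [Finset.sum_apply]
  ext n
  rw [hsum, fwdDiff_iter_finsetSum, Finset.sum_apply, Fintype.sum_eq_single K]
  · simp [fwdDiff_iter_natCast_choose_self]
  intro i hi
  rw [fwdDiff_iter_const_smul]
  rcases lt_or_gt_of_ne hi with hlt | hgt
  · rw [fwdDiff_iter_eq_zero_of_eq_const (fwdDiff_iter_natCast_choose_self i) hlt, smul_zero]
    rfl
  · simp [htop i hgt]

lemma fwdDiff_iter_eq_sum_choose_mul_shift [Ring R] [CharP R 2] (f : ℕ → R) (k n : ℕ) :
    Δ_[1] ^[k] f n = ∑ j ∈ range (k + 1), (k.choose j : R) * f (n + j) := by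
  rw [fwdDiff_iter_eq_sum_shift]
  refine sum_congr rfl fun j _ ↦ ?_
  simp [zsmul_eq_mul, CharTwo.neg_eq]

lemma shift_eq_sum_range_fwdDiff_iter [Ring R] (f : ℕ → R) {j K : ℕ} (hj : j ≤ K) (n : ℕ) :
    f (n + j) = ∑ m ∈ range (K + 1), (j.choose m : R) * Δ_[1] ^[m] f n := by
  have := shift_eq_sum_fwdDiff_iter 1 f j n
  rw [smul_eq_mul, mul_one] at this
  rw [this, sum_subset (range_subset_range.2 (show j + 1 ≤ K + 1 by omega))]
  · simp [nsmul_eq_mul]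
  · intro m _ hm
    rw [Nat.choose_eq_zero_of_lt (by simpa using hm), zero_smul]

lemma sum_mul_shift_eq_sum_mul_fwdDiff_iter [Ring R] (e f : ℕ → R) (K n : ℕ) :
    ∑ j ∈ range (K + 1), e j * f (n + j) =
      ∑ m ∈ range (K + 1), (∑ j ∈ range (K + 1), e j * j.choose m) * Δ_[1] ^[m] f n := by
  calc ∑ j ∈ range (K + 1), e j * f (n + j)
      = ∑ j ∈ range (K + 1), ∑ m ∈ range (K + 1), e j * (j.choose m * Δ_[1] ^[m] f n) := by
        refine sum_congr rfl fun j hj ↦ ?_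
        rw [shift_eq_sum_range_fwdDiff_iter f (Nat.lt_succ_iff.1 (mem_range.1 hj)), mul_sum]
    _ = _ := by
        rw [sum_comm]
        simp only [sum_mul, mul_assoc]

lemma eq_zero_of_sum_mul_fwdDiff_iter_eq_zero [Ring R] [NoZeroDivisors R] {f : ℕ → R} {K : ℕ}
    {u : R} (hu : u ≠ 0) (hf : Δ_[1] ^[K] f = fun _ ↦ u) {β : ℕ → R}
    (hβ : ∀ n, ∑ m ∈ range (K + 1), β m * Δ_[1] ^[m] f n = 0) : ∀ m ≤ K, β m = 0 := by
  have hcomb : ∑ l ∈ range (K + 1), β l • Δ_[1] ^[l] f = 0 := by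
    ext n
    simpa [Finset.sum_apply] using hβ n
  intro m
  induction m using Nat.strong_induction_on with
  | _ m ih =>
    intro hm
    -- Applying `Δ^[K - m]` kills every term but the `m`-th one.
    have h := congrFun (congrArg (Δ_[1] ^[K - m]) hcomb) 0
    rw [fwdDiff_iter_finsetSum, Finset.sum_apply, sum_eq_single m] at h
    · rw [fwdDiff_iter_const_smul, ← iterate_add_apply, Nat.sub_add_cancel hm, hf] at h
      simpa [hu] using h
    · intro l hl hlm
      rw [fwdDiff_iter_const_smul, ← iterate_add_apply]
      rcases lt_or_gt_of_ne hlm with hlt | hgt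
      · simp [ih l hlt (by omega)]
      · simp [fwdDiff_iter_eq_zero_of_eq_const hf (show K < K - m + l by omega)]
    · exact fun hm' ↦ absurd (mem_range.2 (Nat.lt_succ_of_le hm)) hm'

lemma exists_ne_sum_mul_shift_of_fwdDiff_iter_eq_const [Ring R] [NoZeroDivisors R]
    {f : ℕ → R} {K : ℕ} {u : R} (hu : u ≠ 0) (hf : Δ_[1] ^[K] f = fun _ ↦ u) (a : ℕ → R) :
    ∃ n, f (n + K) ≠ ∑ j ∈ range K, a j * f (n + j) := by
  by_contra! hrec
  have : Nontrivial R := nontrivial_of_ne u 0 hu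
  set e : ℕ → R := fun j ↦ if j = K then 1 else -a j
  have he : ∀ n, ∑ j ∈ range (K + 1), e j * f (n + j) = 0 := by
    intro n
    have hlow : ∀ j ∈ range K, e j * f (n + j) = -(a j * f (n + j)) := fun j hj ↦ by
      simp [e, (mem_range.1 hj).ne]
    rw [sum_range_succ, sum_congr rfl hlow, sum_neg_distrib, ← hrec n]
    simp [e]
  have heK : ∑ j ∈ range (K + 1), e j * j.choose K = 1 := by
    rw [sum_range_succ, sum_eq_zero fun j hj ↦ by
      rw [Nat.choose_eq_zero_of_lt (mem_range.1 hj), Nat.cast_zero, mul_zero]]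
    simp [e]
  have := eq_zero_of_sum_mul_fwdDiff_iter_eq_zero hu hf
    (fun n ↦ (sum_mul_shift_eq_sum_mul_fwdDiff_iter e f K n).symm.trans (he n)) K le_rfl
  exact one_ne_zero (heK.symm.trans this)

end

/-- For a sequence with nonzero B-representation coefficient vector `c` whose largest
nonzero index is `ik`, the linear complexity equals `ik + 1`:
(a) the sequence satisfies the order-`(ik+1)` recurrence with coefficients `C(ik+1, j)`;
(b) it satisfies no linear recurrence of order `ik`. -/
theorem linear_complexity_eq_top_index (t : ℕ) (c : Fin (2 ^ t) → ZMod 2)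
    (ik : Fin (2 ^ t)) (hik : c ik ≠ 0) (htop : ∀ j : Fin (2 ^ t), ik < j → c j = 0)
    (s : ℕ → ZMod 2)
    (hs : ∀ n : ℕ, s n = ∑ i : Fin (2 ^ t), c i * (n.choose (i : ℕ) : ZMod 2)) :
    (∀ n : ℕ,
      ∑ j ∈ Finset.range ((ik : ℕ) + 2), (((ik : ℕ) + 1).choose j : ZMod 2) * s (n + j)
        = 0) ∧
    (∀ a : ℕ → ZMod 2, ∃ n : ℕ,
      s (n + (ik : ℕ)) ≠ ∑ j ∈ Finset.range (ik : ℕ), a j * s (n + j)) := by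
  have hdiff : Δ_[1] ^[ik] s = fun _ ↦ c ik := by
    rw [funext hs]
    exact fwdDiff_iter_sum_mul_choose c ik htop
  refine ⟨fun n ↦ ?_, exists_ne_sum_mul_shift_of_fwdDiff_iter_eq_const hik hdiff⟩
  calc _ = Δ_[1] ^[ik + 1] s n := (fwdDiff_iter_eq_sum_choose_mul_shift s _ n).symm
    _ = 0 := by rw [fwdDiff_iter_eq_zero_of_eq_const hdiff (lt_add_one _)]; rfl
end
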